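/- arXiv:2111.06538 — 4 statements merged into one kernel-verified Lean document; each statement's English description precedes it below -/
import Mathlib

section
/- If F is an irreducible singular M-matrix of size n×n and D is a nonzero nonnegative diagonal matrix, then F + D is an irreducible nonsingular M-matrix (all eigenvalues of F + D have strictly positive real part). -/
open Matrix

noncomputable def eigSet {n : ℕ} (A : Matrix (Fin n) (Fin n) ℝ) : Set ℂ :=
  spectrum ℂ (A.map (fun a => (a : ℂ)))

def IsMetzler {n : ℕ} (A : Matrix (Fin n) (Fin n) ℝ) : Prop :=
  ∀ i j, i ≠ j → 0 ≤ A i j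

def IsMMatrix {n : ℕ} (F : Matrix (Fin n) (Fin n) ℝ) : Prop :=
  IsMetzler (-F) ∧ ∀ μ ∈ eigSet F, 0 ≤ μ.re

/-- Irreducibility: no nonempty proper subset of indices is invariant,
i.e. the associated directed graph is strongly connected. -/
def MatIrreducible {n : ℕ} (A : Matrix (Fin n) (Fin n) ℝ) : Prop :=
  ∀ S : Set (Fin n), S.Nonempty → S ≠ Set.univ → ∃ i ∈ S, ∃ j ∉ S, A i j ≠ 0

/-!
Put `A = -F`: a Metzler irreducible matrix all of whose eigenvalues have real part `≤ 0`.
Suppose `μ` is an eigenvalue of `A - D` with `0 ≤ Re μ`, with eigenvector `x`. The triangle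
inequality applied to a nonnegative shift `A - D + t` gives `(Re μ) |x| ≤ (A - D) |x|`, so
`y = |x|` satisfies `0 ≤ D y ≤ A y`.
For a nonnegative irreducible `B`, `(1 + B)^(n-1)` maps nonzero nonnegative vectors to positive
ones. Take `B = A + t`. If `A y = 0`, then `(1 + B)^(n-1) y = (1 + t)^(n-1) y`, so `y > 0`, and
`D y = 0` forces `D = 0`.
Otherwise `w = (1 + B)^(n-1) y` and `A w = (1 + B)^(n-1) (A y)` are both strictly positive, so
`ε w ≤ A w` for some `ε > 0`. Then `‖(A + t)^k‖ ≥ (ε + t)^k`, and Gelfand's formula yields an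
eigenvalue of `A + t` of modulus `≥ ε + t`; for `t` large this eigenvalue has real part
`> t`, i.e. `A` has an eigenvalue with positive real part, a contradiction.
-/

open Filter Finset

attribute [local instance] Matrix.linftyOpNormedAddCommGroup Matrix.linftyOpNormedRing
  Matrix.linftyOpNormedAlgebra

section Nonneg

variable {ι : Type*} [Fintype ι] {B : Matrix ι ι ℝ}

theorem Matrix.exists_mulVec_eq_smul_of_mem_spectrum [DecidableEq ι] {K : Type*} [Field K]
    {A : Matrix ι ι K} {μ : K} (h : μ ∈ spectrum K A) : ∃ x ≠ 0, A *ᵥ x = μ • x := by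
  rw [← spectrum_toLin', ← Module.End.hasEigenvalue_iff_mem_spectrum] at h
  obtain ⟨x, hx⟩ := h.exists_hasEigenvector
  exact ⟨x, hx.2, by simpa using hx.apply_eq_smul⟩

theorem Matrix.pow_mulVec_eq_pow_smul [DecidableEq ι] {y : ι → ℝ} {c : ℝ} (h : B *ᵥ y = c • y)
    (k : ℕ) : B ^ k *ᵥ y = c ^ k • y := by
  induction k with
  | zero => simp
  | succ k ih => rw [pow_succ, ← mulVec_mulVec, h, mulVec_smul, ih, smul_smul, pow_succ']

theorem Matrix.mulVec_mono_of_nonneg (hB : ∀ i j, 0 ≤ B i j) {u v : ι → ℝ} (huv : u ≤ v) :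
    B *ᵥ u ≤ B *ᵥ v := fun i =>
  Finset.sum_le_sum fun j _ => mul_le_mul_of_nonneg_left (huv j) (hB i j)

theorem Matrix.mul_le_mulVec_apply (hB : ∀ i j, 0 ≤ B i j) {v : ι → ℝ} (hv : 0 ≤ v) (i j : ι) :
    B i j * v j ≤ (B *ᵥ v) i :=
  Finset.single_le_sum (f := fun k => B i k * v k) (fun k _ => mul_nonneg (hB i k) (hv k))
    (Finset.mem_univ j)

theorem Matrix.le_one_add_mulVec [DecidableEq ι] (hB : ∀ i j, 0 ≤ B i j) {v : ι → ℝ}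
    (hv : 0 ≤ v) : v ≤ (1 + B) *ᵥ v := by
  rw [add_mulVec, one_mulVec]
  exact le_add_of_nonneg_right (by simpa using mulVec_mono_of_nonneg hB hv)

theorem Matrix.add_smul_one_mulVec [DecidableEq ι] (t : ℝ) (v : ι → ℝ) :
    (B + t • 1) *ᵥ v = B *ᵥ v + t • v := by
  rw [add_mulVec, smul_mulVec, one_mulVec]

theorem Matrix.pow_smul_le_pow_mulVec [DecidableEq ι] (hB : ∀ i j, 0 ≤ B i j) {w : ι → ℝ}
    {θ : ℝ} (hθ : 0 ≤ θ) (h : θ • w ≤ B *ᵥ w) (k : ℕ) : θ ^ k • w ≤ B ^ k *ᵥ w := by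
  induction k with
  | zero => simp
  | succ k ih =>
    calc θ ^ (k + 1) • w = θ ^ k • θ • w := by rw [pow_succ, mul_smul]
      _ ≤ θ ^ k • (B *ᵥ w) := smul_le_smul_of_nonneg_left h (pow_nonneg hθ k)
      _ = B *ᵥ (θ ^ k • w) := (mulVec_smul _ _ _).symm
      _ ≤ B *ᵥ (B ^ k *ᵥ w) := mulVec_mono_of_nonneg hB ih
      _ = B ^ (k + 1) *ᵥ w := by rw [mulVec_mulVec, pow_succ']

theorem Matrix.norm_map_ofReal (M : Matrix ι ι ℝ) : ‖M.map ((↑) : ℝ → ℂ)‖ = ‖M‖ := by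
  simp [linfty_opNorm_def]

theorem Matrix.pow_le_norm_pow_of_smul_le_mulVec [DecidableEq ι] (hB : ∀ i j, 0 ≤ B i j)
    {w : ι → ℝ} (hw : 0 ≤ w) (hw0 : w ≠ 0) {θ : ℝ} (hθ : 0 ≤ θ) (h : θ • w ≤ B *ᵥ w) (k : ℕ) :
    θ ^ k ≤ ‖B ^ k‖ := by
  have hmono : ‖θ ^ k • w‖ ≤ ‖B ^ k *ᵥ w‖ := by
    refine (pi_norm_le_iff_of_nonneg (norm_nonneg _)).2 fun i => ?_
    have hi := pow_smul_le_pow_mulVec hB hθ h k i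
    have h0 : 0 ≤ (θ ^ k • w) i := smul_nonneg (pow_nonneg hθ k) (hw i)
    refine le_trans ?_ (norm_le_pi_norm _ i)
    rwa [Real.norm_of_nonneg h0, Real.norm_of_nonneg (h0.trans hi)]
  refine le_of_mul_le_mul_right ?_ (norm_pos_iff.2 hw0)
  calc θ ^ k * ‖w‖ = ‖θ ^ k • w‖ := by rw [norm_smul, Real.norm_of_nonneg (pow_nonneg hθ k)]
    _ ≤ ‖B ^ k *ᵥ w‖ := hmono
    _ ≤ ‖B ^ k‖ * ‖w‖ := linfty_opNorm_mulVec _ _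

theorem Matrix.exists_mem_spectrum_le_norm_of_smul_le_mulVec [DecidableEq ι]
    (hB : ∀ i j, 0 ≤ B i j) {w : ι → ℝ} (hw : 0 ≤ w) (hw0 : w ≠ 0) {θ : ℝ} (hθ : 0 ≤ θ)
    (h : θ • w ≤ B *ᵥ w) : ∃ β ∈ spectrum ℂ (B.map ((↑) : ℝ → ℂ)), θ ≤ ‖β‖ := by
  have := (Function.ne_iff.mp hw0).nonempty
  set a := B.map ((↑) : ℝ → ℂ)
  have hρ : ENNReal.ofReal θ ≤ spectralRadius ℂ a := by
    refine ge_of_tendsto (spectrum.pow_norm_pow_one_div_tendsto_nhds_spectralRadius a) ?_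
    filter_upwards [eventually_ne_atTop 0] with k hk
    refine ENNReal.ofReal_le_ofReal ?_
    have hnorm : ‖a ^ k‖ = ‖B ^ k‖ := by
      rw [← norm_map_ofReal]; exact congrArg norm (Matrix.map_pow B Complex.ofRealHom k).symm
    calc θ = (θ ^ k) ^ (1 / (k : ℝ)) := by rw [one_div, Real.pow_rpow_inv_natCast hθ hk]
      _ ≤ ‖a ^ k‖ ^ (1 / (k : ℝ)) := by
        rw [hnorm]
        exact Real.rpow_le_rpow (by positivity)
          (pow_le_norm_pow_of_smul_le_mulVec hB hw hw0 hθ h k) (by positivity)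
  obtain ⟨β, hβ, hβρ⟩ := spectrum.exists_nnnorm_eq_spectralRadius a
  refine ⟨β, hβ, ?_⟩
  rw [← hβρ] at hρ
  simpa [ENNReal.ofReal_le_iff_le_toReal] using hρ

theorem exists_pos_smul_le_of_pos [Nonempty ι] {w v : ι → ℝ} (hw : ∀ i, 0 < w i)
    (hv : ∀ i, 0 < v i) : ∃ ε : ℝ, 0 < ε ∧ ε • w ≤ v := by
  obtain ⟨i₀, hi₀⟩ := Finite.exists_min fun i => v i / w i
  exact ⟨v i₀ / w i₀, div_pos (hv i₀) (hw i₀), fun i => (le_div_iff₀ (hw i)).1 (hi₀ i)⟩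

end Nonneg

section Metzler

variable {n : ℕ} {A : Matrix (Fin n) (Fin n) ℝ}

theorem mem_eigSet_neg_iff {μ : ℂ} : μ ∈ eigSet (-A) ↔ -μ ∈ eigSet A := by
  rw [eigSet, eigSet, Matrix.map_neg _ Complex.ofReal_neg, ← spectrum.neg_eq, Set.mem_neg]

theorem mem_eigSet_add_smul_one_iff {t : ℝ} {μ : ℂ} :
    μ ∈ eigSet (A + t • 1) ↔ μ - t ∈ eigSet A := by
  have hmap : (A + t • 1).map ((↑) : ℝ → ℂ) = A.map (↑) + algebraMap ℂ _ (t : ℂ) := by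
    rw [Algebra.algebraMap_eq_smul_one]
    ext i j
    rcases eq_or_ne i j with rfl | hij <;> simp [*]
  rw [eigSet, eigSet, hmap, spectrum.mem_iff, spectrum.mem_iff, map_sub]
  congr! 2
  abel

theorem IsMetzler.nonneg_add_smul_one (hA : IsMetzler A) {t : ℝ} (ht : ∀ i, -A i i ≤ t)
    (i j : Fin n) : 0 ≤ (A + t • 1) i j := by
  rcases eq_or_ne i j with rfl | hij
  · have := ht i
    simp only [Matrix.add_apply, Matrix.smul_apply, one_apply_eq, smul_eq_mul, mul_one]
    linarith
  · simpa [one_apply_ne hij] using hA i j hij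

theorem IsMetzler.exists_nonneg_add_smul_one (hA : IsMetzler A) :
    ∃ t : ℝ, 0 ≤ t ∧ ∀ i j, 0 ≤ (A + t • 1) i j := by
  obtain ⟨t, ht⟩ := Finite.exists_le fun i => -A i i
  exact ⟨max t 0, le_max_right _ _,
    hA.nonneg_add_smul_one fun i => (ht i).trans (le_max_left _ _)⟩

theorem IsMetzler.exists_re_smul_le_mulVec (hA : IsMetzler A) {μ : ℂ} (hμ : μ ∈ eigSet A) :
    ∃ y : Fin n → ℝ, 0 ≤ y ∧ y ≠ 0 ∧ μ.re • y ≤ A *ᵥ y := by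
  obtain ⟨t, -, hB⟩ := hA.exists_nonneg_add_smul_one
  have hμt : μ + t ∈ eigSet (A + t • 1) := mem_eigSet_add_smul_one_iff.2 (by simpa using hμ)
  obtain ⟨x, hx0, hx⟩ := exists_mulVec_eq_smul_of_mem_spectrum hμt
  refine ⟨fun i => ‖x i‖, fun i => norm_nonneg _, ?_, fun i => ?_⟩
  · exact fun h => hx0 (funext fun i => norm_eq_zero.1 (congrFun h i))
  have key : (μ.re + t) * ‖x i‖ ≤ ((A + t • 1) *ᵥ fun j => ‖x j‖) i :=
    calc (μ.re + t) * ‖x i‖ ≤ ‖μ + t‖ * ‖x i‖ :=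
          mul_le_mul_of_nonneg_right (by simpa using Complex.re_le_norm (μ + t)) (norm_nonneg _)
      _ = ‖(((A + t • 1).map ((↑) : ℝ → ℂ)) *ᵥ x) i‖ := by
          rw [hx, Pi.smul_apply, smul_eq_mul, norm_mul]
      _ = ‖∑ j, ((A + t • 1) i j : ℂ) * x j‖ := rfl
      _ ≤ ∑ j, ‖((A + t • 1) i j : ℂ) * x j‖ := norm_sum_le _ _
      _ = _ := by
          simp only [norm_mul, Complex.norm_real, Real.norm_of_nonneg (hB _ _)]; rfl
  rw [add_smul_one_mulVec] at key
  simp only [Pi.add_apply, Pi.smul_apply, smul_eq_mul] at key ⊢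
  linarith

/-- The eigenvalue of `A + t • 1` of modulus `≥ θ + t` given by Gelfand's formula has imaginary
part bounded by `‖A‖` and real part `≤ c + t`; for large `t` these are incompatible when
`c < θ`. -/
theorem IsMetzler.le_of_smul_le_mulVec (hA : IsMetzler A) {w : Fin n → ℝ} (hw : 0 ≤ w)
    (hw0 : w ≠ 0) {θ c : ℝ} (h : θ • w ≤ A *ᵥ w) (hc : ∀ β ∈ eigSet A, β.re ≤ c) : θ ≤ c := by
  by_contra! hcθ
  have := (Function.ne_iff.mp hw0).nonempty
  set N := ‖A.map ((↑) : ℝ → ℂ)‖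
  have hgrow : Tendsto (fun t : ℝ => (θ - c) * (θ + c + 2 * t)) atTop atTop :=
    (tendsto_atTop_add_const_left _ _ (tendsto_id.const_mul_atTop two_pos)).const_mul_atTop
      (sub_pos.2 hcθ)
  obtain ⟨t, hdiag, hNt, hθt, hgap⟩ : ∃ t : ℝ, (∀ i, -A i i ≤ t) ∧ N ≤ t ∧ -θ ≤ t ∧
      N ^ 2 < (θ - c) * (θ + c + 2 * t) :=
    ((eventually_all.2 fun i => eventually_ge_atTop (-A i i)).and <|
      (eventually_ge_atTop N).and <| (eventually_ge_atTop (-θ)).and <|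
        hgrow.eventually_gt_atTop _).exists
  have hshift : (θ + t) • w ≤ (A + t • 1) *ᵥ w := by
    rw [add_smul_one_mulVec, add_smul]
    exact add_le_add h le_rfl
  obtain ⟨β, hβ, hβθ⟩ := exists_mem_spectrum_le_norm_of_smul_le_mulVec
    (hA.nonneg_add_smul_one hdiag) hw hw0 (by linarith) hshift
  have hα : β - t ∈ eigSet A := mem_eigSet_add_smul_one_iff.1 hβ
  have hre : β.re - t ≤ c := by simpa using hc _ hα
  have hnorm : ‖β - t‖ ≤ N := spectrum.norm_le_norm_of_mem hα
  have hre_ge : t - N ≤ β.re := by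
    have := (Complex.abs_re_le_norm (β - t)).trans hnorm
    simp only [Complex.sub_re, Complex.ofReal_re] at this
    linarith [neg_abs_le (β.re - t)]
  have him : β.im ^ 2 ≤ N ^ 2 := by
    have := (Complex.abs_im_le_norm (β - t)).trans hnorm
    simp only [Complex.sub_im, Complex.ofReal_im, sub_zero] at this
    nlinarith [abs_nonneg β.im, sq_abs β.im]
  have hsq : (θ + t) ^ 2 ≤ β.re ^ 2 + β.im ^ 2 :=
    calc (θ + t) ^ 2 ≤ ‖β‖ ^ 2 := pow_le_pow_left₀ (by linarith) hβθ 2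
      _ = β.re ^ 2 + β.im ^ 2 := by rw [Complex.sq_norm, Complex.normSq_apply]; ring
  nlinarith

end Metzler

section Irreducible

variable {n : ℕ} {B : Matrix (Fin n) (Fin n) ℝ} {v : Fin n → ℝ}

theorem MatIrreducible.of_offDiag_ne_zero {A : Matrix (Fin n) (Fin n) ℝ} (hA : MatIrreducible A)
    (hAB : ∀ i j, i ≠ j → A i j ≠ 0 → B i j ≠ 0) : MatIrreducible B := by
  intro S hS hSu
  obtain ⟨i, hi, j, hj, hij⟩ := hA S hS hSu
  exact ⟨i, hi, j, hj, hAB i j (fun h => hj (h ▸ hi)) hij⟩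

theorem MatIrreducible.add_smul_one (hB : MatIrreducible B) (t : ℝ) :
    MatIrreducible (B + t • 1) :=
  hB.of_offDiag_ne_zero fun i j hij h => by simpa [one_apply_ne hij] using h

theorem filter_pos_subset_filter_pos_one_add_mulVec (hB : ∀ i j, 0 ≤ B i j) (hv : 0 ≤ v) :
    ({i | 0 < v i} : Finset (Fin n)) ⊆ ({i | 0 < ((1 + B) *ᵥ v) i} : Finset (Fin n)) :=
  fun k => by
  simpa using fun hk : 0 < v k => hk.trans_le (le_one_add_mulVec hB hv k)

/-- Irreducibility provides an edge from a zero entry of `v` to a positive one, along which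
`1 + B` creates a new positive entry. -/
theorem MatIrreducible.card_pos_lt_card_pos_one_add_mulVec (hirr : MatIrreducible B)
    (hB : ∀ i j, 0 ≤ B i j) (hv : 0 ≤ v) (hv0 : v ≠ 0) (hlt : #{i | 0 < v i} < n) :
    #{i | 0 < v i} < #{i | 0 < ((1 + B) *ᵥ v) i} := by
  have hS : {i | ¬ 0 < v i}.Nonempty := by
    obtain ⟨i, -, hi⟩ := Finset.exists_mem_notMem_of_card_lt_card (t := Finset.univ)
      (hlt.trans_eq (Finset.card_fin n).symm)
    exact ⟨i, by simpa using hi⟩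
  have hSu : {i | ¬ 0 < v i} ≠ Set.univ := by
    obtain ⟨j, hj⟩ := Function.ne_iff.mp hv0
    exact fun h => (h ▸ Set.mem_univ j : j ∈ {i | ¬ 0 < v i}) (lt_of_le_of_ne (hv j) hj.symm)
  obtain ⟨i, hi, j, hj, hij⟩ := hirr _ hS hSu
  refine Finset.card_lt_card ⟨filter_pos_subset_filter_pos_one_add_mulVec hB hv,
    fun hsub => hi ?_⟩
  have hvj : 0 < v j := not_not.1 hj
  have hBij : 0 < B i j := lt_of_le_of_ne (hB i j) hij.symm
  have hpos : 0 < ((1 + B) *ᵥ v) i := by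
    rw [add_mulVec, one_mulVec, Pi.add_apply]
    linarith [show 0 ≤ v i from hv i, mul_pos hBij hvj, mul_le_mulVec_apply hB hv i j]
  simpa using hsub (by simpa using hpos)

theorem MatIrreducible.min_card_pos_succ_le (hirr : MatIrreducible B) (hB : ∀ i j, 0 ≤ B i j)
    (hv : 0 ≤ v) (hv0 : v ≠ 0) :
    min n (#{i | 0 < v i} + 1) ≤ #{i | 0 < ((1 + B) *ᵥ v) i} := by
  rcases lt_or_ge #{i | 0 < v i} n with hlt | hge
  · have := hirr.card_pos_lt_card_pos_one_add_mulVec hB hv hv0 hlt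
    omega
  · have := Finset.card_le_card (filter_pos_subset_filter_pos_one_add_mulVec hB hv)
    omega

theorem MatIrreducible.min_card_pos_add_le (hirr : MatIrreducible B) (hB : ∀ i j, 0 ≤ B i j)
    (hv : 0 ≤ v) (hv0 : v ≠ 0) (k : ℕ) :
    min n (#{i | 0 < v i} + k) ≤ #{i | 0 < ((1 + B) ^ k *ᵥ v) i} := by
  induction k generalizing v with
  | zero => simp
  | succ k ih =>
    have hle := le_one_add_mulVec hB hv
    have hu0 : (1 + B) *ᵥ v ≠ 0 := fun h => hv0 (le_antisymm (h ▸ hle) hv)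
    have hstep := hirr.min_card_pos_succ_le hB hv hv0
    have := ih (hv.trans hle) hu0
    rw [pow_succ, ← mulVec_mulVec]
    omega

theorem MatIrreducible.one_add_pow_mulVec_pos (hirr : MatIrreducible B) (hB : ∀ i j, 0 ≤ B i j)
    (hv : 0 ≤ v) (hv0 : v ≠ 0) (i : Fin n) : 0 < ((1 + B) ^ (n - 1) *ᵥ v) i := by
  have hcard := hirr.min_card_pos_add_le hB hv hv0 (n - 1)
  obtain ⟨j, hj⟩ := Function.ne_iff.mp hv0
  have hj : j ∈ ({i | 0 < v i} : Finset (Fin n)) := by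
    simpa using lt_of_le_of_ne (hv j) hj.symm
  have := Finset.card_pos.2 ⟨j, hj⟩
  have huniv := Finset.eq_univ_of_card ({i | 0 < ((1 + B) ^ (n - 1) *ᵥ v) i} : Finset (Fin n))
    (le_antisymm (Finset.card_le_univ _) (by simp only [Fintype.card_fin]; omega))
  have hi : i ∈ ({i | 0 < ((1 + B) ^ (n - 1) *ᵥ v) i} : Finset (Fin n)) := by
    rw [huniv]; exact Finset.mem_univ i
  simpa using hi

end Irreducible

section Stability

variable {n : ℕ} {A : Matrix (Fin n) (Fin n) ℝ} {y : Fin n → ℝ}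

theorem IsMetzler.pos_of_mulVec_eq_zero (hA : IsMetzler A) (hirr : MatIrreducible A)
    (hy : 0 ≤ y) (hy0 : y ≠ 0) (hAy : A *ᵥ y = 0) (i : Fin n) : 0 < y i := by
  obtain ⟨t, ht, hB⟩ := hA.exists_nonneg_add_smul_one
  have hstep : (1 + (A + t • 1)) *ᵥ y = (1 + t) • y := by
    rw [add_mulVec, add_smul_one_mulVec, hAy, one_mulVec, zero_add, add_smul, one_smul]
  have hpos := (hirr.add_smul_one t).one_add_pow_mulVec_pos hB hy hy0 i
  rw [pow_mulVec_eq_pow_smul hstep, Pi.smul_apply, smul_eq_mul] at hpos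
  exact pos_of_mul_pos_right hpos (by positivity)

theorem IsMetzler.exists_pos_smul_le_mulVec (hA : IsMetzler A) (hirr : MatIrreducible A)
    (hy : 0 ≤ y) (hAy : 0 ≤ A *ᵥ y) (hAy0 : A *ᵥ y ≠ 0) :
    ∃ w : Fin n → ℝ, 0 ≤ w ∧ w ≠ 0 ∧ ∃ ε : ℝ, 0 < ε ∧ ε • w ≤ A *ᵥ w := by
  have hy0 : y ≠ 0 := by rintro rfl; exact hAy0 (mulVec_zero A)
  obtain ⟨i₀, -⟩ := Function.ne_iff.mp hy0
  have : Nonempty (Fin n) := ⟨i₀⟩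
  obtain ⟨t, -, hB⟩ := hA.exists_nonneg_add_smul_one
  set P := (1 + (A + t • 1)) ^ (n - 1)
  have hcomm : Commute A P := ((Commute.one_right A).add_right
    ((Commute.refl A).add_right ((Commute.one_right A).smul_right t))).pow_right _
  have hw := (hirr.add_smul_one t).one_add_pow_mulVec_pos hB hy hy0
  have hAw : ∀ i, 0 < (A *ᵥ (P *ᵥ y)) i := by
    rw [mulVec_mulVec, hcomm.eq, ← mulVec_mulVec]
    exact (hirr.add_smul_one t).one_add_pow_mulVec_pos hB hAy hAy0
  exact ⟨P *ᵥ y, fun i => (hw i).le, fun h => (hw i₀).ne' (congrFun h i₀),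
    exists_pos_smul_le_of_pos hw hAw⟩

theorem IsMetzler.re_neg_of_mem_eigSet_sub_diagonal (hA : IsMetzler A) (hirr : MatIrreducible A)
    (hspec : ∀ β ∈ eigSet A, β.re ≤ 0) {d : Fin n → ℝ} (hd : 0 ≤ d) (hd0 : d ≠ 0) {μ : ℂ}
    (hμ : μ ∈ eigSet (A - diagonal d)) : μ.re < 0 := by
  by_contra! hμ0
  have hAd : IsMetzler (A - diagonal d) := fun i j hij => by
    simpa [diagonal_apply_ne _ hij] using hA i j hij
  obtain ⟨y, hy, hy0, hμy⟩ := hAd.exists_re_smul_le_mulVec hμ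
  have hdy : d * y ≤ A *ᵥ y := fun i => by
    have := hμy i
    simp only [sub_mulVec, Pi.sub_apply, mulVec_diagonal, Pi.smul_apply, smul_eq_mul] at this
    have := mul_nonneg hμ0 (hy i)
    simp only [Pi.mul_apply]
    linarith
  have hAy : 0 ≤ A *ᵥ y := (mul_nonneg hd hy).trans hdy
  by_cases hAy0 : A *ᵥ y = 0
  · refine hd0 (funext fun i => le_antisymm ?_ (hd i))
    have hdyi : d i * y i ≤ 0 := by simpa [hAy0] using hdy i
    exact nonpos_of_mul_nonpos_left hdyi (hA.pos_of_mulVec_eq_zero hirr hy hy0 hAy0 i)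
  · obtain ⟨w, hw, hw0, ε, hε, hεw⟩ := hA.exists_pos_smul_le_mulVec hirr hy hAy hAy0
    exact hε.not_ge (hA.le_of_smul_le_mulVec hw hw0 hεw hspec)

end Stability

theorem stmt1_general {n : ℕ} (F D : Matrix (Fin n) (Fin n) ℝ)
    (hF : IsMMatrix F) (hFirr : MatIrreducible F)
    (hDdiag : ∀ i j, i ≠ j → D i j = 0) (hDnonneg : ∀ i, 0 ≤ D i i)
    (hDne : D ≠ 0) :
    MatIrreducible (F + D) ∧ IsMetzler (-(F + D)) ∧
      ∀ μ ∈ eigSet (F + D), 0 < μ.re := by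
  have hD : D = diagonal D.diag := ((isDiag_iff_diagonal_diag D).1 hDdiag).symm
  refine ⟨hFirr.of_offDiag_ne_zero fun i j hij => by simp [hDdiag i j hij],
    fun i j hij => by simpa [hDdiag i j hij] using hF.1 i j hij, fun μ hμ => ?_⟩
  have hspec : ∀ β ∈ eigSet (-F), β.re ≤ 0 := fun β hβ => by
    simpa using hF.2 _ (mem_eigSet_neg_iff.1 hβ)
  have hd0 : D.diag ≠ 0 := fun h => hDne (by rw [hD, h]; exact diagonal_zero)
  have hμ' : -μ ∈ eigSet (-F - diagonal D.diag) := by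
    rwa [← neg_add', ← hD, mem_eigSet_neg_iff, neg_neg]
  simpa using hF.1.re_neg_of_mem_eigSet_sub_diagonal
    (hFirr.of_offDiag_ne_zero fun i j _ => by simp) hspec hDnonneg hd0 hμ'

theorem stmt1 {n : ℕ} (F D : Matrix (Fin n) (Fin n) ℝ)
    (hF : IsMMatrix F) (hFirr : MatIrreducible F) (hFsing : (0 : ℂ) ∈ eigSet F)
    (hDdiag : ∀ i j, i ≠ j → D i j = 0) (hDnonneg : ∀ i, 0 ≤ D i i)
    (hDne : D ≠ 0) :
    MatIrreducible (F + D) ∧ IsMetzler (-(F + D)) ∧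
      ∀ μ ∈ eigSet (F + D), 0 < μ.re :=
  stmt1_general F D hF hFirr hDdiag hDnonneg hDne
end

section
/- Let A be an n×n irreducible nonnegative matrix with ρ(A) > 1 and x̄ with 0 < x̄ < 1 entrywise satisfying [-I + (I - X̄)A] x̄ = 0 with X̄ = diag(x̄). Then the spectral abscissa of -I + (I - X̄)A equals 0, it is a simple eigenvalue, and the associated left eigenvector u and right eigenvector x̄ can be chosen with all entries strictly positive, and are unique up to positive scaling. -/
/-!
Write `B = (I - X̄)A`, so that `M = -I + B` and `B x̄ = x̄`. Then `B` is nonnegative and irreducible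
with a positive fixed vector, which is all the Perron–Frobenius input needed. Comparing an eigenvector
`v` with `x̄` at the index maximising `|vᵢ| / x̄ᵢ` gives `|λ| ≤ 1` for every eigenvalue of `B`, hence
`Re μ ≤ 0` for every eigenvalue of `M`. Subtracting from a fixed vector the largest multiple of `x̄`
it dominates leaves a nonnegative fixed vector with a zero entry, which irreducibility forces to
vanish: so the fixed vectors of `B` form the line through `x̄`. Taking absolute values of a left fixed
vector and pairing with `x̄` yields a positive left fixed vector `u`, and `u ⬝ x̄ > 0` rules out Jordan
chains at `0`, so `0` is a simple root of the characteristic polynomial of `M`.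
-/

open Matrix

noncomputable def specRad {n : ℕ} (A : Matrix (Fin n) (Fin n) ℝ) : ℝ :=
  sSup ((fun z : ℂ => ‖z‖) '' eigSet A)

noncomputable def specAbs {n : ℕ} (A : Matrix (Fin n) (Fin n) ℝ) : ℝ :=
  sSup (Complex.re '' eigSet A)

section Spectrum

variable {K ι : Type*} [Field K] [Fintype ι] [DecidableEq ι]

theorem Matrix.mem_spectrum_iff_exists_mulVec_eq_smul (A : Matrix ι ι K) (μ : K) :
    μ ∈ spectrum K A ↔ ∃ v ≠ 0, A *ᵥ v = μ • v := by
  rw [← Matrix.spectrum_toLin', ← Module.End.hasEigenvalue_iff_mem_spectrum,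
    Module.End.hasEigenvalue_iff, Submodule.ne_bot_iff]
  simp only [Module.End.mem_eigenspace_iff, Matrix.toLin'_apply]
  exact exists_congr fun _ => and_comm

theorem Module.End.maxGenEigenspace_zero_eq_span {V : Type*} [AddCommGroup V] [Module K V]
    {f : Module.End K V} {x : V} (hker : LinearMap.ker f = K ∙ x) (φ : Module.Dual K V)
    (hφf : ∀ v, φ (f v) = 0) (hφx : φ x ≠ 0) :
    f.maxGenEigenspace 0 = K ∙ x := by
  have hpow : ∀ (k : ℕ) (y : V), (f ^ k) y = 0 → y ∈ K ∙ x := by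
    intro k
    induction k with
    | zero =>
      intro y hy
      rw [pow_zero, Module.End.one_apply] at hy
      exact hy ▸ Submodule.zero_mem _
    | succ k ih =>
      intro y hy
      rw [pow_succ, Module.End.mul_apply] at hy
      obtain ⟨c, hc⟩ := Submodule.mem_span_singleton.1 (ih (f y) hy)
      have hc0 : c = 0 := by
        have := hφf y
        rw [← hc, map_smul, smul_eq_mul] at this
        exact (mul_eq_zero.1 this).resolve_right hφx
      rw [hc0, zero_smul] at hc
      rw [← hker]
      exact hc.symm
  apply le_antisymm
  · intro y hy
    obtain ⟨k, hk⟩ := (Module.End.mem_maxGenEigenspace f 0 y).1 hy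
    rw [zero_smul, sub_zero] at hk
    exact hpow k y hk
  · rw [← hker, ← Module.End.eigenspace_zero]
    exact Module.End.eigenspace_le_maxGenEigenspace

theorem Matrix.rootMultiplicity_zero_charpoly_eq_one {M : Matrix ι ι K} {x u : ι → K}
    (hker : ∀ y, M *ᵥ y = 0 → ∃ t : K, y = t • x) (hx : M *ᵥ x = 0) (hx0 : x ≠ 0)
    (hu : u ᵥ* M = 0) (hux : u ⬝ᵥ x ≠ 0) :
    M.charpoly.rootMultiplicity 0 = 1 := by
  have hker' : LinearMap.ker (Matrix.toLin' M) = K ∙ x := by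
    ext y
    rw [LinearMap.mem_ker, Matrix.toLin'_apply, Submodule.mem_span_singleton]
    constructor
    · intro hy
      obtain ⟨t, rfl⟩ := hker y hy
      exact ⟨t, rfl⟩
    · rintro ⟨t, rfl⟩
      rw [Matrix.mulVec_smul, hx, smul_zero]
  have hφ : ∀ v, dotProductBilin K K u (Matrix.toLin' M v) = 0 := by
    intro v
    simp [Matrix.dotProduct_mulVec, hu]
  rw [Polynomial.rootMultiplicity_eq_natTrailingDegree', ← Matrix.charpoly_toLin',
    ← LinearMap.finrank_maxGenEigenspace_zero_eq,
    Module.End.maxGenEigenspace_zero_eq_span hker' _ hφ (by simpa using hux)]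
  exact finrank_span_singleton hx0

end Spectrum

section Nonneg

variable {ι : Type*} [Fintype ι] {C : Matrix ι ι ℝ} {x : ι → ℝ}

theorem eq_zero_of_nonneg_of_dotProduct_eq_zero {z : ι → ℝ} (hz : 0 ≤ z) (hx : ∀ i, 0 < x i)
    (hzx : z ⬝ᵥ x = 0) : z = 0 := by
  have hterm := (Finset.sum_eq_zero_iff_of_nonneg fun i _ => mul_nonneg (hz i) (hx i).le).1 hzx
  funext i
  exact (mul_eq_zero.1 (hterm i (Finset.mem_univ i))).resolve_right (hx i).ne'

theorem norm_le_one_of_mulVec_eq_smul (hC : ∀ i j, 0 ≤ C i j) (hx : ∀ i, 0 < x i)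
    (hCx : C *ᵥ x = x) {μ : ℂ} {v : ι → ℂ} (hv : v ≠ 0)
    (hCv : C.map (fun a => (a : ℂ)) *ᵥ v = μ • v) : ‖μ‖ ≤ 1 := by
  obtain ⟨j, hj⟩ := Function.ne_iff.1 hv
  have : Nonempty ι := ⟨j⟩
  obtain ⟨i, hi⟩ := Finite.exists_max fun k => ‖v k‖ / x k
  set t := ‖v i‖ / x i
  have hvt : ∀ k, ‖v k‖ ≤ t * x k := fun k => (div_le_iff₀ (hx k)).1 (hi k)
  have hvi : ‖v i‖ = t * x i := (div_mul_cancel₀ _ (hx i).ne').symm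
  have ht : 0 < t := (div_pos (norm_pos_iff.2 hj) (hx j)).trans_le (hi j)
  have hvi_pos : 0 < ‖v i‖ := hvi ▸ mul_pos ht (hx i)
  have hmain : ‖μ‖ * ‖v i‖ ≤ 1 * ‖v i‖ :=
    calc ‖μ‖ * ‖v i‖ = ‖∑ k, (C i k : ℂ) * v k‖ := by
          rw [← norm_mul, ← smul_eq_mul, ← Pi.smul_apply, ← hCv]; rfl
      _ ≤ ∑ k, C i k * ‖v k‖ := by
          refine (norm_sum_le _ _).trans_eq (Finset.sum_congr rfl fun k _ => ?_)
          rw [norm_mul, Complex.norm_real, Real.norm_of_nonneg (hC i k)]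
      _ ≤ ∑ k, C i k * (t * x k) :=
          Finset.sum_le_sum fun k _ => mul_le_mul_of_nonneg_left (hvt k) (hC i k)
      _ = t * (C *ᵥ x) i := by
          simp only [mulVec, dotProduct, Finset.mul_sum]
          exact Finset.sum_congr rfl fun k _ => by ring
      _ = 1 * ‖v i‖ := by rw [hCx, hvi, one_mul]
  exact le_of_mul_le_mul_right hmain hvi_pos

end Nonneg

namespace MatIrreducible

variable {n : ℕ} {C : Matrix (Fin n) (Fin n) ℝ}

theorem transpose (hC : MatIrreducible C) : MatIrreducible Cᵀ := by
  intro S hS hSu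
  obtain ⟨i, hi, j, hj, hij⟩ := hC Sᶜ (Set.nonempty_compl.2 hSu) (Set.compl_ne_univ.2 hS)
  exact ⟨j, not_not.1 hj, i, hi, hij⟩

theorem diagonal_mul (hC : MatIrreducible C) {d : Fin n → ℝ} (hd : ∀ i, d i ≠ 0) :
    MatIrreducible (diagonal d * C) := by
  intro S hS hSu
  obtain ⟨i, hi, j, hj, hij⟩ := hC S hS hSu
  exact ⟨i, hi, j, hj, by rw [Matrix.diagonal_mul]; exact mul_ne_zero (hd i) hij⟩

theorem eq_zero_of_mulVec_le (hC : MatIrreducible C) (hC0 : ∀ i j, 0 ≤ C i j) {w : Fin n → ℝ}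
    (hw : 0 ≤ w) (hCw : C *ᵥ w ≤ w) (hzero : ∃ i, w i = 0) : w = 0 := by
  by_contra hne
  have hSu : {i | w i = 0} ≠ Set.univ := fun h =>
    hne (funext fun i => (Set.eq_univ_iff_forall.1 h i : w i = 0))
  obtain ⟨i, hi, j, hj, hij⟩ := hC {i | w i = 0} hzero hSu
  have hterms : ∀ k ∈ Finset.univ, 0 ≤ C i k * w k := fun k _ => mul_nonneg (hC0 i k) (hw k)
  have hsum : ∑ k, C i k * w k = 0 :=
    le_antisymm ((hCw i).trans_eq hi) (Finset.sum_nonneg hterms)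
  have hij0 : C i j * w j = 0 :=
    (Finset.sum_eq_zero_iff_of_nonneg hterms).1 hsum j (Finset.mem_univ j)
  exact hj ((mul_eq_zero.1 hij0).resolve_left hij)

theorem pos_of_mulVec_le (hC : MatIrreducible C) (hC0 : ∀ i j, 0 ≤ C i j) {w : Fin n → ℝ}
    (hw : 0 ≤ w) (hw0 : w ≠ 0) (hCw : C *ᵥ w ≤ w) (i : Fin n) : 0 < w i :=
  (hw i).lt_of_ne fun h => hw0 (hC.eq_zero_of_mulVec_le hC0 hw hCw ⟨i, h.symm⟩)

theorem eq_smul_of_mulVec_eq_self (hC : MatIrreducible C) (hC0 : ∀ i j, 0 ≤ C i j)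
    {x : Fin n → ℝ} (hx : ∀ i, 0 < x i) (hCx : C *ᵥ x = x) {y : Fin n → ℝ} (hCy : C *ᵥ y = y) :
    ∃ t : ℝ, y = t • x := by
  cases isEmpty_or_nonempty (Fin n)
  · exact ⟨0, Subsingleton.elim _ _⟩
  obtain ⟨i, hi⟩ := Finite.exists_min fun k => y k / x k
  set t := y i / x i
  refine ⟨t, sub_eq_zero.1 (hC.eq_zero_of_mulVec_le hC0 (w := y - t • x) ?_ ?_ ⟨i, ?_⟩)⟩
  · intro k
    simpa [sub_nonneg] using (le_div_iff₀ (hx k)).1 (hi k)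
  · rw [mulVec_sub, mulVec_smul, hCx, hCy]
  · simp [t, div_mul_cancel₀ _ (hx i).ne']

theorem exists_pos_smul_of_mulVec_eq_self (hC : MatIrreducible C) (hC0 : ∀ i j, 0 ≤ C i j)
    {x : Fin n → ℝ} (hx : ∀ i, 0 < x i) (hCx : C *ᵥ x = x) {y : Fin n → ℝ} (hy : ∀ i, 0 < y i)
    (hCy : C *ᵥ y = y) : ∃ c : ℝ, 0 < c ∧ y = c • x := by
  obtain ⟨t, rfl⟩ := hC.eq_smul_of_mulVec_eq_self hC0 hx hCx hCy
  cases isEmpty_or_nonempty (Fin n)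
  · exact ⟨1, one_pos, Subsingleton.elim _ _⟩
  obtain ⟨i⟩ := ‹Nonempty (Fin n)›
  exact ⟨t, pos_of_mul_pos_left (hy i) (hx i).le, rfl⟩

theorem exists_pos_vecMul_eq_self (hC : MatIrreducible C) (hC0 : ∀ i j, 0 ≤ C i j)
    {x : Fin n → ℝ} (hx : ∀ i, 0 < x i) (hCx : C *ᵥ x = x) :
    ∃ u : Fin n → ℝ, (∀ i, 0 < u i) ∧ u ᵥ* C = u := by
  cases isEmpty_or_nonempty (Fin n)
  · exact ⟨0, isEmptyElim, Subsingleton.elim _ _⟩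
  obtain ⟨i⟩ := ‹Nonempty (Fin n)›
  have hdet : (C - 1).det = 0 := by
    refine exists_mulVec_eq_zero_iff.1 ⟨x, fun h => (hx i).ne' (congrFun h i), ?_⟩
    rw [sub_mulVec, one_mulVec, hCx, sub_self]
  obtain ⟨v, hv0, hv⟩ := exists_vecMul_eq_zero_iff.2 hdet
  rw [vecMul_sub, vecMul_one, sub_eq_zero] at hv
  set u : Fin n → ℝ := fun i => |v i|
  have hu : 0 ≤ u := fun i => abs_nonneg (v i)
  have hu0 : u ≠ 0 := fun h => hv0 (funext fun i => abs_eq_zero.1 (congrFun h i))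
  have huC : u ≤ u ᵥ* C := by
    intro j
    calc u j = |(v ᵥ* C) j| := by rw [hv]
      _ = |∑ i, v i * C i j| := rfl
      _ ≤ ∑ i, |v i * C i j| := Finset.abs_sum_le_sum_abs _ _
      _ = (u ᵥ* C) j := Finset.sum_congr rfl fun i _ => by rw [abs_mul, abs_of_nonneg (hC0 i j)]
  -- the defect `u C - u` is nonnegative and orthogonal to the positive vector `x`
  have hfix : u ᵥ* C = u := by
    refine (sub_eq_zero.1 (eq_zero_of_nonneg_of_dotProduct_eq_zero (sub_nonneg.2 huC) hx ?_))
    rw [sub_dotProduct, ← dotProduct_mulVec, hCx, sub_self]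
  refine ⟨u, hC.transpose.pos_of_mulVec_le (fun i j => hC0 j i) hu hu0 ?_, hfix⟩
  rw [mulVec_transpose, hfix]

end MatIrreducible

section SpectralBounds

variable {n : ℕ}

theorem nonempty_of_specRad_ne_zero {A : Matrix (Fin n) (Fin n) ℝ} (hA : specRad A ≠ 0) :
    Nonempty (Fin n) := by
  by_contra hn
  have := not_nonempty_iff.1 hn
  have : Subsingleton (Matrix (Fin n) (Fin n) ℂ) := subsingleton_of_empty_left
  simp [specRad, eigSet, spectrum.of_subsingleton] at hA

theorem specAbs_neg_one_add_eq_zero [Nonempty (Fin n)] {C : Matrix (Fin n) (Fin n) ℝ}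
    (hC0 : ∀ i j, 0 ≤ C i j) {x : Fin n → ℝ} (hx : ∀ i, 0 < x i) (hCx : C *ᵥ x = x) :
    specAbs (-1 + C) = 0 := by
  set Cc := C.map (fun a => (a : ℂ))
  have hmap : (-1 + C).map (fun a => (a : ℂ)) = -1 + Cc := by
    simp [Cc, Matrix.map_add, Matrix.map_neg, Matrix.map_one]
  refine IsGreatest.csSup_eq ⟨⟨0, ?_, Complex.zero_re⟩, ?_⟩
  · obtain ⟨i⟩ := ‹Nonempty (Fin n)›
    rw [eigSet, mem_spectrum_iff_exists_mulVec_eq_smul, hmap]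
    refine ⟨fun k => (x k : ℂ), fun h => (hx i).ne' (by simpa using congrFun h i), ?_⟩
    have hCxc : Cc *ᵥ (fun k => (x k : ℂ)) = fun k => (x k : ℂ) := by
      funext k
      simpa [Cc, mulVec, dotProduct] using congrArg (fun r : ℝ => (r : ℂ)) (congrFun hCx k)
    rw [add_mulVec, neg_mulVec, one_mulVec, hCxc, neg_add_cancel, zero_smul]
  · rintro _ ⟨μ, hμ, rfl⟩
    obtain ⟨v, hv0, hv⟩ := (mem_spectrum_iff_exists_mulVec_eq_smul _ μ).1 hμ
    rw [hmap, add_mulVec, neg_mulVec, one_mulVec] at hv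
    have hCv : Cc *ᵥ v = (μ + 1) • v := by
      rw [add_smul, one_smul, ← hv, neg_add_cancel_comm]
    have hnorm := norm_le_one_of_mulVec_eq_smul hC0 hx hCx hv0 hCv
    have hre := Complex.re_le_norm (μ + 1)
    rw [Complex.add_re, Complex.one_re] at hre
    linarith

end SpectralBounds

theorem stmt8 {n : ℕ} (A : Matrix (Fin n) (Fin n) ℝ) (xbar : Fin n → ℝ)
    (hAnonneg : ∀ i j, 0 ≤ A i j) (hAirr : MatIrreducible A)
    (hρ : 1 < specRad A)
    (hx : ∀ i, 0 < xbar i ∧ xbar i < 1)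
    (heq : (-1 + (1 - Matrix.diagonal xbar) * A).mulVec xbar = 0) :
    specAbs (-1 + (1 - Matrix.diagonal xbar) * A) = 0 ∧
    -- 0 is a simple eigenvalue (algebraic multiplicity one)
    (Polynomial.rootMultiplicity 0 (-1 + (1 - Matrix.diagonal xbar) * A).charpoly = 1) ∧
    -- there is a positive left eigenvector, unique up to positive scaling,
    -- and the positive right eigenvector `xbar` is unique up to positive scaling
    (∃ u : Fin n → ℝ, (∀ i, 0 < u i) ∧
      Matrix.vecMul u (-1 + (1 - Matrix.diagonal xbar) * A) = 0 ∧
      (∀ w : Fin n → ℝ, (∀ i, 0 < w i) →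
        Matrix.vecMul w (-1 + (1 - Matrix.diagonal xbar) * A) = 0 →
        ∃ c : ℝ, 0 < c ∧ w = c • u)) ∧
    (∀ y : Fin n → ℝ, (∀ i, 0 < y i) →
      (-1 + (1 - Matrix.diagonal xbar) * A).mulVec y = 0 →
      ∃ c : ℝ, 0 < c ∧ y = c • xbar) := by
  have : Nonempty (Fin n) := nonempty_of_specRad_ne_zero (by linarith)
  have hxpos i : 0 < xbar i := (hx i).1
  obtain ⟨i₀⟩ := ‹Nonempty (Fin n)›
  set B := diagonal (fun i => 1 - xbar i) * A
  have hB : (1 - diagonal xbar) * A = B := by rw [← diagonal_one, diagonal_sub]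
  have hB0 i j : 0 ≤ B i j := by
    simp only [B, Matrix.diagonal_mul]
    exact mul_nonneg (sub_nonneg.2 (hx i).2.le) (hAnonneg i j)
  have hBirr : MatIrreducible B := hAirr.diagonal_mul fun i => (sub_pos.2 (hx i).2).ne'
  have hright y : (-1 + B) *ᵥ y = 0 ↔ B *ᵥ y = y := by
    rw [add_mulVec, neg_mulVec, one_mulVec, neg_add_eq_zero, eq_comm]
  have hleft w : w ᵥ* (-1 + B) = 0 ↔ Bᵀ *ᵥ w = w := by
    rw [vecMul_add, vecMul_neg, vecMul_one, neg_add_eq_zero, eq_comm, mulVec_transpose]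
  rw [hB] at heq ⊢
  have hBx : B *ᵥ xbar = xbar := (hright xbar).1 heq
  obtain ⟨u, hu, huB⟩ := hBirr.exists_pos_vecMul_eq_self hB0 hxpos hBx
  have huM : u ᵥ* (-1 + B) = 0 := by rw [hleft, mulVec_transpose, huB]
  refine ⟨specAbs_neg_one_add_eq_zero hB0 hxpos hBx, ?_, ⟨u, hu, huM, fun w hw hwM => ?_⟩,
    fun y hy hyM => hBirr.exists_pos_smul_of_mulVec_eq_self hB0 hxpos hBx hy ((hright y).1 hyM)⟩
  · refine rootMultiplicity_zero_charpoly_eq_one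
      (fun y hy => hBirr.eq_smul_of_mulVec_eq_self hB0 hxpos hBx ((hright y).1 hy)) heq
      (fun h => (hxpos i₀).ne' (congrFun h i₀)) huM (ne_of_gt ?_)
    exact Finset.sum_pos (fun k _ => mul_pos (hu k) (hxpos k)) Finset.univ_nonempty
  · exact hBirr.transpose.exists_pos_smul_of_mulVec_eq_self (fun i j => hB0 j i) hu
      (by rw [mulVec_transpose, huB]) hw ((hleft w).1 hwM)
end

section
/- Let X̄ = diag(x̄) with 0 < x̄_i < 1 for all i, and let B' be an irreducible nonnegative matrix satisfying [I - (I-X̄)B'] x̄ = 0. Then the matrix F = (I-X̄)^{-2} - B' is an irreducible nonsingular M-matrix, and hence F^{-1} is a positive matrix. -/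
/-!
The equilibrium identity says `(1 - x̄ᵢ) (B' x̄)ᵢ = x̄ᵢ`, so with `F = (I - X̄)⁻² - B'` one gets
`(F x̄)ᵢ = (x̄ᵢ / (1 - x̄ᵢ))² > 0`: the Z-matrix `F` maps the positive vector `x̄` to a positive
vector. For such a matrix, comparing any `u` with multiples of `x̄` at the index where `uᵢ / x̄ᵢ`
is extremal gives a minimum principle (`F u ≥ 0 → u ≥ 0`, hence nonsingularity and `F⁻¹ ≥ 0`)
and an `x̄`-weighted Gershgorin bound putting every eigenvalue in the right half-plane.
Irreducibility upgrades `F⁻¹ ≥ 0` to `F⁻¹ > 0`: the zero set of a nonnegative nonzero column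
of `F⁻¹` would have to be closed under the edges of `B'`.
-/

open Matrix

/-- A nonsingular M-matrix: `-F` is Metzler and all eigenvalues have positive real part. -/
def IsNonsingularMMatrix {n : ℕ} (F : Matrix (Fin n) (Fin n) ℝ) : Prop :=
  IsMetzler (-F) ∧ ∀ μ ∈ eigSet F, 0 < μ.re

lemma MatIrreducible.diagonal_sub {n : ℕ} {B : Matrix (Fin n) (Fin n) ℝ}
    (hB : MatIrreducible B) (d : Fin n → ℝ) : MatIrreducible (diagonal d - B) := by
  intro S hS hS'
  obtain ⟨i, hi, j, hj, hij⟩ := hB S hS hS'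
  have hne : i ≠ j := fun h => hj (h ▸ hi)
  exact ⟨i, hi, j, hj, by simpa [diagonal_apply_ne _ hne] using hij⟩

lemma Matrix.exists_mulVec_eq_smul_of_mem_spectrum_s15 {n : ℕ} {A : Matrix (Fin n) (Fin n) ℂ}
    {μ : ℂ} (hμ : μ ∈ spectrum ℂ A) : ∃ w ≠ 0, A *ᵥ w = μ • w := by
  rw [← spectrum_toLin', ← Module.End.hasEigenvalue_iff_mem_spectrum] at hμ
  obtain ⟨w, hw, hw0⟩ := hμ.exists_hasEigenvector
  exact ⟨w, hw0, by simpa using Module.End.mem_eigenspace_iff.mp hw⟩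

namespace IsMetzler

lemma neg_diagonal_sub {n : ℕ} {B : Matrix (Fin n) (Fin n) ℝ} (hB : IsMetzler B)
    (d : Fin n → ℝ) : IsMetzler (-(diagonal d - B)) := by
  intro i j hij
  simpa [diagonal_apply_ne _ hij] using hB i j hij

variable {n : ℕ} {F : Matrix (Fin n) (Fin n) ℝ} {v : Fin n → ℝ}

lemma mul_nonpos_of_apply_eq_zero (hF : IsMetzler (-F)) {u : Fin n → ℝ} (hu : ∀ j, 0 ≤ u j)
    {k : Fin n} (hk : u k = 0) (j : Fin n) : F k j * u j ≤ 0 := by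
  by_cases hjk : j = k
  · simp [hjk, hk]
  · exact mul_nonpos_of_nonpos_of_nonneg (by simpa using hF k j (Ne.symm hjk)) (hu j)

theorem nonneg_of_nonneg_mulVec (hF : IsMetzler (-F)) (hv : ∀ i, 0 < v i)
    (hFv : ∀ i, 0 < (F *ᵥ v) i) {u : Fin n → ℝ} (hu : ∀ i, 0 ≤ (F *ᵥ u) i) (i : Fin n) :
    0 ≤ u i := by
  by_contra! hui
  have : Nonempty (Fin n) := ⟨i⟩
  obtain ⟨k, hk⟩ := Finite.exists_min fun j => u j / v j
  set t := u k / v k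
  have ht : t < 0 := (hk i).trans_lt (div_neg_of_neg_of_pos hui (hv i))
  have hw : ∀ j, 0 ≤ (u - t • v) j := fun j => by
    have := (le_div_iff₀ (hv j)).mp (hk j)
    simp only [Pi.sub_apply, Pi.smul_apply, smul_eq_mul]
    linarith
  have hwk : (u - t • v) k = 0 := by
    simp [t, div_mul_cancel₀ _ (hv k).ne']
  have hle : (F *ᵥ (u - t • v)) k ≤ 0 :=
    show ∑ j, F k j * (u - t • v) j ≤ 0 from
      Finset.sum_nonpos fun j _ => hF.mul_nonpos_of_apply_eq_zero hw hwk j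
  have hpos : 0 < (F *ᵥ (u - t • v)) k := by
    rw [mulVec_sub, mulVec_smul]
    simp only [Pi.sub_apply, Pi.smul_apply, smul_eq_mul]
    nlinarith [hu k, hFv k]
  exact hle.not_gt hpos

theorem det_ne_zero (hF : IsMetzler (-F)) (hv : ∀ i, 0 < v i)
    (hFv : ∀ i, 0 < (F *ᵥ v) i) : F.det ≠ 0 := by
  intro h
  obtain ⟨w, hw, hFw⟩ := exists_mulVec_eq_zero_iff.mpr h
  refine hw (funext fun i => le_antisymm ?_ ?_)
  · have := hF.nonneg_of_nonneg_mulVec hv hFv (u := -w) (by simp [mulVec_neg, hFw]) i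
    simpa using this
  · exact hF.nonneg_of_nonneg_mulVec hv hFv (by simp [hFw]) i

theorem pos_of_nonneg_mulVec (hF : IsMetzler (-F)) (hirr : MatIrreducible F)
    (hv : ∀ i, 0 < v i) (hFv : ∀ i, 0 < (F *ᵥ v) i) {u : Fin n → ℝ}
    (hu : ∀ i, 0 ≤ (F *ᵥ u) i) (hu0 : u ≠ 0) (i : Fin n) : 0 < u i := by
  have hnn := hF.nonneg_of_nonneg_mulVec hv hFv hu
  by_contra! hi
  obtain ⟨k, hk, j, hj, hkj⟩ := hirr {l | u l = 0} ⟨i, le_antisymm hi (hnn i)⟩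
    fun h => hu0 (funext fun l => Set.eq_univ_iff_forall.mp h l)
  have hkj' : k ≠ j := fun h => hj (h ▸ hk)
  have hterm : F k j * u j < 0 :=
    mul_neg_of_neg_of_pos ((by simpa using hF k j hkj' : F k j ≤ 0).lt_of_ne hkj)
      ((hnn j).lt_of_ne' hj)
  have : (F *ᵥ u) k < 0 :=
    calc (F *ᵥ u) k = ∑ l, F k l * u l := rfl
      _ < ∑ _l : Fin n, (0 : ℝ) := Finset.sum_lt_sum
          (fun l _ => hF.mul_nonpos_of_apply_eq_zero hnn hk l) ⟨j, Finset.mem_univ _, hterm⟩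
      _ = 0 := Finset.sum_const_zero
  exact this.not_ge (hu k)

theorem inv_apply_pos (hF : IsMetzler (-F)) (hirr : MatIrreducible F)
    (hv : ∀ i, 0 < v i) (hFv : ∀ i, 0 < (F *ᵥ v) i) (i j : Fin n) : 0 < F⁻¹ i j := by
  have hinv : F * F⁻¹ = 1 :=
    mul_nonsing_inv F (isUnit_iff_ne_zero.mpr (hF.det_ne_zero hv hFv))
  have hcol : F *ᵥ (fun l => F⁻¹ l j) = fun l => (1 : Matrix (Fin n) (Fin n) ℝ) l j := by
    rw [← hinv]; rfl
  refine hF.pos_of_nonneg_mulVec hirr hv hFv (u := fun l => F⁻¹ l j) ?_ ?_ i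
  · intro l
    simp only [hcol, one_apply]
    split_ifs <;> norm_num
  · intro h0
    have := congrFun hcol j
    rw [h0, mulVec_zero] at this
    simp at this

theorem re_pos_of_mulVec_eq_smul (hF : IsMetzler (-F)) (hv : ∀ i, 0 < v i)
    (hFv : ∀ i, 0 < (F *ᵥ v) i) {μ : ℂ} {w : Fin n → ℂ} (hw : w ≠ 0)
    (hμ : F.map (↑) *ᵥ w = μ • w) : 0 < μ.re := by
  obtain ⟨i, hi⟩ := Function.ne_iff.mp hw
  have : Nonempty (Fin n) := ⟨i⟩
  obtain ⟨k, hk⟩ := Finite.exists_max fun j => ‖w j‖ / v j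
  set r := ‖w k‖ / v k
  have hr : 0 < r := (div_pos (norm_pos_iff.mpr hi) (hv i)).trans_le (hk i)
  have hwk : 0 < ‖w k‖ := (div_pos_iff_of_pos_right (hv k)).mp hr
  set a : Fin n → ℝ := fun j => (if j = k then F k k else 0) - F k j
  have ha : ∀ j, 0 ≤ a j := fun j => by
    by_cases hjk : j = k
    · simp [a, hjk]
    · simpa [a, hjk] using hF k j (Ne.symm hjk)
  have hav : ∑ j, a j * v j = F k k * v k - (F *ᵥ v) k := by
    simp [a, sub_mul, Finset.sum_sub_distrib, ite_mul, mulVec, dotProduct]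
  have haw : ∑ j, (a j : ℂ) * w j = ((F k k : ℂ) - μ) * w k := by
    have hrow := congrFun hμ k
    simp only [mulVec, dotProduct, map_apply, Pi.smul_apply, smul_eq_mul] at hrow
    simp [a, sub_mul, Finset.sum_sub_distrib, apply_ite Complex.ofReal, ite_mul, hrow]
  have hdisc : ‖(F k k : ℂ) - μ‖ * ‖w k‖ < F k k * ‖w k‖ :=
    calc ‖(F k k : ℂ) - μ‖ * ‖w k‖ = ‖∑ j, (a j : ℂ) * w j‖ := by rw [haw, norm_mul]
      _ ≤ ∑ j, a j * ‖w j‖ := (norm_sum_le _ _).trans_eq <| Finset.sum_congr rfl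
          fun j _ => by rw [norm_mul, Complex.norm_real, Real.norm_of_nonneg (ha j)]
      _ ≤ ∑ j, a j * (r * v j) := Finset.sum_le_sum fun j _ =>
          mul_le_mul_of_nonneg_left ((div_le_iff₀ (hv j)).mp (hk j)) (ha j)
      _ = r * (F k k * v k - (F *ᵥ v) k) := by
          rw [← hav, Finset.mul_sum]; exact Finset.sum_congr rfl fun j _ => by ring
      _ < r * (F k k * v k) := by nlinarith [hFv k]
      _ = F k k * ‖w k‖ := by simp only [r]; field_simp [(hv k).ne']
  have hlt := lt_of_mul_lt_mul_right hdisc hwk.le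
  have hre := Complex.re_le_norm ((F k k : ℂ) - μ)
  simp only [Complex.sub_re, Complex.ofReal_re] at hre
  linarith

theorem isNonsingularMMatrix (hF : IsMetzler (-F)) (hv : ∀ i, 0 < v i)
    (hFv : ∀ i, 0 < (F *ᵥ v) i) : IsNonsingularMMatrix F := by
  refine ⟨hF, fun μ hμ => ?_⟩
  obtain ⟨w, hw, hμw⟩ := exists_mulVec_eq_smul_of_mem_spectrum_s15 hμ
  exact hF.re_pos_of_mulVec_eq_smul hv hFv hw hμw

end IsMetzler

lemma diagonal_sub_mulVec_apply_of_equilibrium {n : ℕ} {B : Matrix (Fin n) (Fin n) ℝ}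
    {x : Fin n → ℝ} (hx : ∀ i, x i ≠ 1) (heq : (1 - (1 - diagonal x) * B) *ᵥ x = 0)
    (i : Fin n) :
    ((diagonal (fun i => ((1 - x i)⁻¹) ^ 2) - B) *ᵥ x) i = (x i / (1 - x i)) ^ 2 := by
  have hrow := congrFun heq i
  rw [sub_mulVec, one_mulVec, ← mulVec_mulVec, sub_mulVec, one_mulVec] at hrow
  simp only [Pi.sub_apply, mulVec_diagonal, Pi.zero_apply] at hrow
  have h1 : 1 - x i ≠ 0 := sub_ne_zero.mpr (hx i).symm
  rw [sub_mulVec, Pi.sub_apply, mulVec_diagonal]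
  field_simp
  linear_combination (1 - x i) * hrow

theorem stmt15 {n : ℕ} (B' : Matrix (Fin n) (Fin n) ℝ) (xbar : Fin n → ℝ)
    (hBnonneg : ∀ i j, 0 ≤ B' i j) (hBirr : MatIrreducible B')
    (hx : ∀ i, 0 < xbar i ∧ xbar i < 1)
    (heq : (1 - (1 - Matrix.diagonal xbar) * B').mulVec xbar = 0) :
    MatIrreducible (Matrix.diagonal (fun i => ((1 - xbar i)⁻¹) ^ 2) - B') ∧
    IsNonsingularMMatrix (Matrix.diagonal (fun i => ((1 - xbar i)⁻¹) ^ 2) - B') ∧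
    ∀ i j, 0 < (Matrix.diagonal (fun i => ((1 - xbar i)⁻¹) ^ 2) - B')⁻¹ i j := by
  have hF : IsMetzler (-(diagonal (fun i => ((1 - xbar i)⁻¹) ^ 2) - B')) :=
    IsMetzler.neg_diagonal_sub (fun i j _ => hBnonneg i j) _
  have hirr := hBirr.diagonal_sub fun i => ((1 - xbar i)⁻¹) ^ 2
  have hv : ∀ i, 0 < xbar i := fun i => (hx i).1
  have hFv : ∀ i, 0 < ((diagonal (fun i => ((1 - xbar i)⁻¹) ^ 2) - B') *ᵥ xbar) i := by
    intro i
    rw [diagonal_sub_mulVec_apply_of_equilibrium (fun i => (hx i).2.ne) heq]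
    exact pow_pos (div_pos (hv i) (sub_pos.mpr (hx i).2)) 2
  exact ⟨hirr, hF.isNonsingularMMatrix hv hFv, hF.inv_apply_pos hirr hv hFv⟩
end

section
/- Let B' be irreducible nonnegative with [I - (I-X̄)B'] x̄ = 0 where X̄ = diag(x̄), 0 < x̄ < 1 entrywise, and let v^T > 0 be the left eigenvector of (I-X̄)B' for eigenvalue 1. Suppose δB satisfies δB x̄ = [(I-X̄)^{-2} - B'] δx for some δx ∈ R^n. Then v^T (I-X̄) δB x̄ < 0 if and only if v^T (I-X̄)^{-1} X̄ δx < 0. -/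
open Matrix

section

variable {ι K : Type*} [Fintype ι] [DecidableEq ι] [Field K]

theorem diagonal_mul_diagonal_inv_sq (d : ι → K) :
    diagonal d * diagonal (fun i => (d i)⁻¹ ^ 2) = diagonal (fun i => (d i)⁻¹) := by
  rw [diagonal_mul_diagonal]
  congr 1
  funext i
  simpa [sq, mul_assoc] using inv_mul_mul_self (d i)⁻¹

theorem dotProduct_diagonal_mul_mulVec_eq_of_vecMul_eq_self (d v x δx : ι → K)
    (B δB : Matrix ι ι K) (hvL : v ᵥ* (diagonal d * B) = v)
    (hδB : δB *ᵥ x = (diagonal (fun i => (d i)⁻¹ ^ 2) - B) *ᵥ δx) :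
    v ⬝ᵥ ((diagonal d * δB) *ᵥ x) = v ⬝ᵥ (diagonal (fun i => (d i)⁻¹ - 1) *ᵥ δx) := by
  have hvD : v ᵥ* (diagonal d * (diagonal (fun i => (d i)⁻¹ ^ 2) - B)) =
      v ᵥ* diagonal (fun i => (d i)⁻¹ - 1) := by
    have hD : diagonal (fun i => (d i)⁻¹ - 1) = diagonal (fun i => (d i)⁻¹) - 1 := by
      rw [← diagonal_one, diagonal_sub]
    rw [mul_sub, diagonal_mul_diagonal_inv_sq, vecMul_sub, hvL, hD, vecMul_sub, vecMul_one]
  rw [← mulVec_mulVec, hδB, mulVec_mulVec, dotProduct_mulVec, hvD, ← dotProduct_mulVec]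

end

theorem stmt17_general {n : ℕ} (B' δB : Matrix (Fin n) (Fin n) ℝ)
    (xbar v δx : Fin n → ℝ)
    (hx : ∀ i, 0 < xbar i ∧ xbar i < 1)
    (hvL : Matrix.vecMul v ((1 - Matrix.diagonal xbar) * B') = v)
    (hδB : δB.mulVec xbar =
      (Matrix.diagonal (fun i => ((1 - xbar i)⁻¹) ^ 2) - B').mulVec δx) :
    (dotProduct v (((1 - Matrix.diagonal xbar) * δB).mulVec xbar) < 0 ↔
      dotProduct v
        ((Matrix.diagonal (fun i => (1 - xbar i)⁻¹ * xbar i)).mulVec δx) < 0) := by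
  have hdiag : 1 - diagonal xbar = diagonal (fun i => 1 - xbar i) := by
    rw [← diagonal_one, diagonal_sub]
  have hcoef : (fun i => (1 - xbar i)⁻¹ * xbar i) = fun i => (1 - xbar i)⁻¹ - 1 := by
    funext i
    have : 1 - xbar i ≠ 0 := sub_ne_zero.mpr (hx i).2.ne'
    field_simp
    ring
  rw [hdiag] at hvL ⊢
  rw [hcoef, dotProduct_diagonal_mul_mulVec_eq_of_vecMul_eq_self _ v xbar δx B' δB hvL hδB]

theorem stmt17 {n : ℕ} (B' δB : Matrix (Fin n) (Fin n) ℝ)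
    (xbar v δx : Fin n → ℝ)
    (hBnonneg : ∀ i j, 0 ≤ B' i j) (hBirr : MatIrreducible B')
    (hx : ∀ i, 0 < xbar i ∧ xbar i < 1)
    (heq : (1 - (1 - Matrix.diagonal xbar) * B').mulVec xbar = 0)
    (hv : ∀ i, 0 < v i)
    (hvL : Matrix.vecMul v ((1 - Matrix.diagonal xbar) * B') = v)
    (hδB : δB.mulVec xbar =
      (Matrix.diagonal (fun i => ((1 - xbar i)⁻¹) ^ 2) - B').mulVec δx) :
    (dotProduct v (((1 - Matrix.diagonal xbar) * δB).mulVec xbar) < 0 ↔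
      dotProduct v
        ((Matrix.diagonal (fun i => (1 - xbar i)⁻¹ * xbar i)).mulVec δx) < 0) :=
  stmt17_general B' δB xbar v δx hx hvL hδB
end
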